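/- arXiv:2102.07223 — 7 statements merged into one kernel-verified Lean document; each statement's English description precedes it below -/
import Mathlib

section
/- Let v ∈ ℝⁿ with every component vᵢ > 1/√2, and define p_v componentwise by (p_v)ᵢ = (vᵢ − vᵢ³)/(2vᵢ² − 1). Let d_x, d_s ∈ ℝⁿ with d_x + d_s = p_v, and set q_v = d_x − d_s. Then for all α ∈ [0,1], componentwise, v² + α·v·(d_x + d_s) + α²·d_x·d_s ≥ (1−α)·v² + α²·(1 + p_v²/4 − q_v²/4). -/
/-!
Since `d_x + d_s = p_v` and `4 d_x d_s = p_v² - q_v²`, the difference of the two sides is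
`α (v² + v p_v) - α²`. For `v² > 1/2` one has `v² + v p_v - 1 = (v² - 1)² / (2v² - 1) ≥ 0`,
so the difference is at least `α - α² ≥ 0`.
-/

lemma half_lt_sq_of_inv_sqrt_two_lt {v : ℝ} (hv : 1 / Real.sqrt 2 < v) : 1 / 2 < v ^ 2 := by
  rw [one_div, ← Real.sqrt_inv] at hv
  rw [one_div]
  exact (Real.sqrt_lt' (lt_of_le_of_lt (Real.sqrt_nonneg _) hv)).1 hv

lemma one_le_sq_add_mul_div {v : ℝ} (hv : 1 / 2 < v ^ 2) :
    1 ≤ v ^ 2 + v * ((v - v ^ 3) / (2 * v ^ 2 - 1)) := by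
  have hden : 0 < 2 * v ^ 2 - 1 := by linarith
  have hgap : v ^ 2 + v * ((v - v ^ 3) / (2 * v ^ 2 - 1)) - 1
      = (v ^ 2 - 1) ^ 2 / (2 * v ^ 2 - 1) := by
    rw [eq_div_iff hden.ne', sub_mul, add_mul, mul_assoc, div_mul_cancel₀ _ hden.ne']
    ring
  rw [← sub_nonneg, hgap]
  positivity

lemma sq_add_mul_add_sq_mul_ge {v x s α : ℝ} (hv : 1 ≤ v ^ 2 + v * (x + s))
    (hα : α ∈ Set.Icc (0 : ℝ) 1) :
    v ^ 2 + α * v * (x + s) + α ^ 2 * (x * s) ≥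
      (1 - α) * v ^ 2 + α ^ 2 * (1 + (x + s) ^ 2 / 4 - (x - s) ^ 2 / 4) := by
  obtain ⟨hα0, hα1⟩ := hα
  nlinarith [mul_nonneg hα0 (sub_nonneg.2 hv), mul_nonneg hα0 (sub_nonneg.2 hα1)]

theorem stmt2 (n : ℕ) (v dx ds : Fin n → ℝ)
    (hv : ∀ i, v i > 1 / Real.sqrt 2)
    (pv : Fin n → ℝ) (hpv : ∀ i, pv i = (v i - (v i) ^ 3) / (2 * (v i) ^ 2 - 1))
    (hds : dx + ds = pv)
    (qv : Fin n → ℝ) (hqv : qv = dx - ds)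
    (α : ℝ) (hα : α ∈ Set.Icc (0 : ℝ) 1) :
    ∀ i, (v i) ^ 2 + α * v i * (dx i + ds i) + α ^ 2 * (dx i * ds i) ≥
      (1 - α) * (v i) ^ 2 + α ^ 2 * (1 + (pv i) ^ 2 / 4 - (qv i) ^ 2 / 4) := by
  intro i
  have hsum : dx i + ds i = pv i := congrFun hds i
  have hcenter : 1 ≤ v i ^ 2 + v i * (dx i + ds i) := by
    rw [hsum, hpv i]
    exact one_le_sq_add_mul_div (half_lt_sq_of_inv_sqrt_two_lt (hv i))
  rw [← hsum, hqv]
  exact sq_add_mul_add_sq_mul_ge hcenter hα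
end

section
/- Let v ∈ ℝⁿ with vᵢ > 1/√2 for all i, define p_v = (v − v³)/(2v² − e) componentwise, δ = ‖p_v‖/2, and let d_x, d_s ∈ ℝⁿ satisfy d_x + d_s = p_v. Set q_v = d_x − d_s and ω = (‖d_x‖² + ‖d_s‖²)/2. If δ² + ω < 1, then componentwise |q_v²/4 − p_v²/4| < 1 (i.e., ‖(q_v² − p_v²)/4‖_∞ < 1). -/
/-! The entry `(q_v² − p_v²)/4` equals `−d_x d_s` componentwise, and
`|d_x d_s| ≤ (d_x² + d_s²)/2 ≤ ω ≤ δ² + ω < 1`. -/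

lemma abs_mul_le_half_sq_add_sq (x y : ℝ) : |x * y| ≤ (x ^ 2 + y ^ 2) / 2 :=
  abs_le.2 ⟨by nlinarith [sq_nonneg (x + y)], by nlinarith [sq_nonneg (x - y)]⟩

lemma sq_apply_le_sum_sq {ι : Type*} [Fintype ι] (f : ι → ℝ) (i : ι) :
    f i ^ 2 ≤ ∑ j, f j ^ 2 :=
  Finset.single_le_sum (fun j _ => sq_nonneg (f j)) (Finset.mem_univ i)

theorem stmt4_general (n : ℕ) (dx ds : Fin n → ℝ)
    (pv : Fin n → ℝ)
    (hds : dx + ds = pv)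
    (qv : Fin n → ℝ) (hqv : qv = dx - ds)
    (δ ω : ℝ)
    (hω : ω = ((∑ i, (dx i) ^ 2) + ∑ i, (ds i) ^ 2) / 2)
    (h : δ ^ 2 + ω < 1) :
    ∀ i, |(qv i) ^ 2 / 4 - (pv i) ^ 2 / 4| < 1 := by
  intro i
  subst hds hqv
  calc |(dx i - ds i) ^ 2 / 4 - (dx i + ds i) ^ 2 / 4| = |dx i * ds i| := by
        rw [← abs_neg]; congr 1; ring
    _ ≤ (dx i ^ 2 + ds i ^ 2) / 2 := abs_mul_le_half_sq_add_sq _ _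
    _ ≤ ω := by
        rw [hω]; gcongr <;> exact sq_apply_le_sum_sq _ i
    _ < 1 := by linarith [sq_nonneg δ]

theorem stmt4 (n : ℕ) (v dx ds : Fin n → ℝ)
    (hv : ∀ i, v i > 1 / Real.sqrt 2)
    (pv : Fin n → ℝ) (hpv : ∀ i, pv i = (v i - (v i) ^ 3) / (2 * (v i) ^ 2 - 1))
    (hds : dx + ds = pv)
    (qv : Fin n → ℝ) (hqv : qv = dx - ds)
    (δ ω : ℝ) (hδ : δ = Real.sqrt (∑ i, (pv i) ^ 2) / 2)
    (hω : ω = ((∑ i, (dx i) ^ 2) + ∑ i, (ds i) ^ 2) / 2)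
    (h : δ ^ 2 + ω < 1) :
    ∀ i, |(qv i) ^ 2 / 4 - (pv i) ^ 2 / 4| < 1 :=
  stmt4_general n dx ds pv hds qv hqv δ ω hω h
end

section
/- Let x, s, Δx, Δs ∈ ℝⁿ with x > 0, s > 0 (componentwise). Define x(α) = x + αΔx and s(α) = s + αΔs. If x(α)·s(α) > 0 componentwise for all α ∈ [0,1], then x(1) > 0 and s(1) > 0 componentwise. -/
open Set

theorem IsPreconnected.lt_of_forall_ne {X α : Type*} [TopologicalSpace X] [LinearOrder α]
    [TopologicalSpace α] [OrderClosedTopology α] {S : Set X} (hS : IsPreconnected S)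
    {f : X → α} (hf : ContinuousOn f S) {c : α} {a b : X} (ha : a ∈ S) (hb : b ∈ S)
    (hfa : c < f a) (hne : ∀ y ∈ S, f y ≠ c) : c < f b := by
  by_contra! hfb
  obtain ⟨y, hy, hfy⟩ := hS.intermediate_value hb ha hf ⟨hfb, hfa.le⟩
  exact hne y hy hfy

theorem add_pos_of_forall_add_mul_ne_zero {u d : ℝ} (hu : 0 < u)
    (hne : ∀ α ∈ Icc (0 : ℝ) 1, u + α * d ≠ 0) : 0 < u + d := by
  have hpath : ContinuousOn (fun α : ℝ => u + α * d) (Icc 0 1) := by fun_prop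
  simpa using isPreconnected_Icc.lt_of_forall_ne hpath (left_mem_Icc.2 zero_le_one)
    (right_mem_Icc.2 zero_le_one) (by simpa using hu) hne

theorem stmt5 (n : ℕ) (x s Δx Δs : Fin n → ℝ)
    (hx : ∀ i, 0 < x i) (hs : ∀ i, 0 < s i)
    (h : ∀ α ∈ Set.Icc (0 : ℝ) 1, ∀ i, 0 < (x i + α * Δx i) * (s i + α * Δs i)) :
    (∀ i, 0 < x i + Δx i) ∧ (∀ i, 0 < s i + Δs i) :=
  ⟨fun i => add_pos_of_forall_add_mul_ne_zero (hx i) fun α hα =>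
      left_ne_zero_of_mul (h α hα i).ne',
    fun i => add_pos_of_forall_add_mul_ne_zero (hs i) fun α hα =>
      right_ne_zero_of_mul (h α hα i).ne'⟩
end

section
/- Let v₊ ∈ ℝⁿ with (v₊)ᵢ > 1/√2 for all i, and define δ(v₊) = ½‖(v₊ − v₊³)/(2v₊² − e)‖ (componentwise operations, Euclidean norm). Then δ(v₊) ≤ (min(v₊) / (2(2·min(v₊)² − 1))) · ‖e − v₊²‖, where min(v₊) = min_i (v₊)ᵢ. -/
/-!
Componentwise, `(t - t³) / (2t² - 1) = t / (2t² - 1) · (1 - t²)`, and `t ↦ t / (2t² - 1)` is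
decreasing on `(1/√2, ∞)`, so every factor `t / (2t² - 1)` is at most its value at the smallest
coordinate. Pulling this uniform bound out of the Euclidean norm gives the estimate.
-/

open Real Set

lemma one_lt_two_mul_sq_of_inv_sqrt_two_lt {t : ℝ} (ht : 1 / √2 < t) : 1 < 2 * t ^ 2 := by
  have h := pow_lt_pow_left₀ ht (by positivity) two_ne_zero
  rw [div_pow, sq_sqrt zero_le_two] at h
  linarith

lemma antitoneOn_div_two_mul_sq_sub_one :
    AntitoneOn (fun t : ℝ => t / (2 * t ^ 2 - 1)) (Ioi (1 / √2)) := by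
  intro s hs t ht hst
  have hs0 : 0 < s := lt_trans (by positivity) hs
  have ht0 : 0 < t := hs0.trans_le hst
  have hs1 := one_lt_two_mul_sq_of_inv_sqrt_two_lt hs
  have ht1 := one_lt_two_mul_sq_of_inv_sqrt_two_lt ht
  dsimp only
  rw [div_le_div_iff₀ (by linarith) (by linarith)]
  -- the difference of the cross products is `(t - s)(2st + 1)`
  nlinarith [mul_nonneg (sub_nonneg.mpr hst) (by positivity : (0 : ℝ) ≤ 2 * s * t + 1)]

lemma sqrt_sum_sq_mul_le {ι : Type*} [Fintype ι] {a b : ι → ℝ} {c : ℝ} (hc : 0 ≤ c)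
    (ha : ∀ i, |a i| ≤ c) : √(∑ i, (a i * b i) ^ 2) ≤ c * √(∑ i, b i ^ 2) := by
  have hsum : ∑ i, (a i * b i) ^ 2 ≤ c ^ 2 * ∑ i, b i ^ 2 := by
    rw [Finset.mul_sum]
    refine Finset.sum_le_sum fun i _ => ?_
    rw [mul_pow]
    exact mul_le_mul_of_nonneg_right (sq_le_sq' (abs_le.mp (ha i)).1 (abs_le.mp (ha i)).2)
      (sq_nonneg _)
  calc √(∑ i, (a i * b i) ^ 2) ≤ √(c ^ 2 * ∑ i, b i ^ 2) := sqrt_le_sqrt hsum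
    _ = c * √(∑ i, b i ^ 2) := by rw [sqrt_mul (sq_nonneg c), sqrt_sq hc]

theorem stmt8_general (n : ℕ) (vp : Fin n → ℝ)
    (hvp : ∀ i, vp i > 1 / Real.sqrt 2) :
    Real.sqrt (∑ i, ((vp i - (vp i) ^ 3) / (2 * (vp i) ^ 2 - 1)) ^ 2) / 2 ≤
      ((⨅ i, vp i) / (2 * (2 * (⨅ i, vp i) ^ 2 - 1))) *
        Real.sqrt (∑ i, (1 - (vp i) ^ 2) ^ 2) := by
  cases isEmpty_or_nonempty (Fin n)
  · simp
  obtain ⟨i₀, hi₀⟩ := exists_eq_ciInf_of_finite (f := vp)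
  set m := ⨅ i, vp i
  have hm : 1 / √2 < m := hi₀ ▸ hvp i₀
  have hbound : ∀ i, |vp i / (2 * vp i ^ 2 - 1)| ≤ m / (2 * m ^ 2 - 1) := by
    intro i
    have hi := one_lt_two_mul_sq_of_inv_sqrt_two_lt (hvp i)
    rw [abs_of_pos (div_pos (lt_trans (by positivity) (hvp i)) (by linarith))]
    exact antitoneOn_div_two_mul_sq_sub_one hm (hvp i) (ciInf_le (Finite.bddBelow_range vp) i)
  have hm0 : 0 ≤ m / (2 * m ^ 2 - 1) := (abs_nonneg _).trans (hbound i₀)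
  calc √(∑ i, ((vp i - vp i ^ 3) / (2 * vp i ^ 2 - 1)) ^ 2) / 2
      = √(∑ i, (vp i / (2 * vp i ^ 2 - 1) * (1 - vp i ^ 2)) ^ 2) / 2 := by
        congr! 4 with i; ring
    _ ≤ m / (2 * m ^ 2 - 1) * √(∑ i, (1 - vp i ^ 2) ^ 2) / 2 := by
        gcongr; exact sqrt_sum_sq_mul_le hm0 hbound
    _ = _ := by field_simp

theorem stmt8 (n : ℕ) (hn : 0 < n) (vp : Fin n → ℝ)
    (hvp : ∀ i, vp i > 1 / Real.sqrt 2) :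
    Real.sqrt (∑ i, ((vp i - (vp i) ^ 3) / (2 * (vp i) ^ 2 - 1)) ^ 2) / 2 ≤
      ((⨅ i, vp i) / (2 * (2 * (⨅ i, vp i) ^ 2 - 1))) *
        Real.sqrt (∑ i, (1 - (vp i) ^ 2) ^ 2) :=
  stmt8_general n vp hvp
end

section
/- Let v ∈ ℝⁿ with vᵢ > 1/√2 for all i, p_v = (v − v³)/(2v² − e), δ = ‖p_v‖/2, d_x + d_s = p_v, q_v = d_x − d_s, ω = (‖d_x‖² + ‖d_s‖²)/2, θ ∈ (0,1), and v₊² = (e + ((9v² − 4e)/v²)·(p_v²/4) − q_v²/4)/(1−θ) componentwise. Then ‖e − v₊²‖ ≤ (θ√n + 10δ² + ω)/(1−θ). -/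
/-!
Componentwise, `(1 - θ) (1 - v₊²) = -θ - a + b` with `a = (9v² - 4)/v² · p_v²/4 ∈ [0, 9p_v²/4]`
and `b = q_v²/4 ≥ 0`. The triangle inequality and `‖x‖₂ ≤ ‖x‖₁` for nonnegative `x` bound the
norm by `θ√n + ∑ a + ∑ b`, where `∑ a ≤ 9δ²` and, by the parallelogram law, `∑ b = ω - δ²`.
-/

open Finset

section
variable {ι : Type*} [Fintype ι]

lemma sqrt_sum_sq_eq_norm (f : ι → ℝ) : √(∑ i, f i ^ 2) = ‖WithLp.toLp 2 f‖ := by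
  simp [EuclideanSpace.norm_eq]

lemma sqrt_sum_sq_const (c : ℝ) : √(∑ _i : ι, c ^ 2) = |c| * √(Fintype.card ι) := by
  rw [sum_const, card_univ, nsmul_eq_mul, Real.sqrt_mul (by positivity), Real.sqrt_sq_eq_abs,
    mul_comm]

lemma sqrt_sum_sq_le_sum {a : ι → ℝ} (ha : ∀ i, 0 ≤ a i) : √(∑ i, a i ^ 2) ≤ ∑ i, a i :=
  Real.sqrt_le_iff.mpr ⟨sum_nonneg fun i _ => ha i, sum_sq_le_sq_sum_of_nonneg fun i _ => ha i⟩

lemma sqrt_sum_sq_div (f : ι → ℝ) (c : ℝ) :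
    √(∑ i, (f i / c) ^ 2) = √(∑ i, f i ^ 2) / |c| := by
  simp_rw [div_pow, ← sum_div, Real.sqrt_div' _ (sq_nonneg c), Real.sqrt_sq_eq_abs]

lemma sum_sub_sq_add_sum_add_sq (x y : ι → ℝ) :
    ∑ i, (x i - y i) ^ 2 + ∑ i, (x i + y i) ^ 2 = 2 * (∑ i, x i ^ 2 + ∑ i, y i ^ 2) := by
  simp only [← sum_add_distrib, mul_sum]
  exact sum_congr rfl fun i _ => by ring

lemma sqrt_sum_sq_neg_sub_add_le (t : ℝ) {a b : ι → ℝ} (ha : ∀ i, 0 ≤ a i) (hb : ∀ i, 0 ≤ b i) :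
    √(∑ i, (-t - a i + b i) ^ 2) ≤ |t| * √(Fintype.card ι) + ∑ i, a i + ∑ i, b i := by
  have htri := (norm_add_le (WithLp.toLp 2 (fun _ : ι => -t) - WithLp.toLp 2 a)
    (WithLp.toLp 2 b)).trans (add_le_add (norm_sub_le _ _) le_rfl)
  rw [← WithLp.toLp_sub, ← WithLp.toLp_add] at htri
  simp only [← sqrt_sum_sq_eq_norm, Pi.add_apply, Pi.sub_apply, even_two.neg_pow,
    sqrt_sum_sq_const] at htri
  linarith [sqrt_sum_sq_le_sum ha, sqrt_sum_sq_le_sum hb]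

end

lemma half_lt_sq_of_inv_sqrt_two_lt_s9 {x : ℝ} (hx : 1 / √2 < x) : 1 / 2 < x ^ 2 := by
  have h := pow_lt_pow_left₀ hx (by positivity) two_ne_zero
  rwa [div_pow, one_pow, Real.sq_sqrt zero_le_two] at h

lemma nine_mul_sq_sub_four_div_sq_mem_Icc {x : ℝ} (hx : 4 / 9 ≤ x ^ 2) :
    (9 * x ^ 2 - 4) / x ^ 2 ∈ Set.Icc 0 9 := by
  have hx0 : 0 < x ^ 2 := by linarith
  constructor
  · exact div_nonneg (by linarith) hx0.le
  · rw [div_le_iff₀ hx0]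
    linarith

theorem stmt9_general (n : ℕ) (v dx ds : Fin n → ℝ)
    (hv : ∀ i, v i > 1 / Real.sqrt 2)
    (pv : Fin n → ℝ)
    (hds : dx + ds = pv)
    (qv : Fin n → ℝ) (hqv : qv = dx - ds)
    (δ ω θ : ℝ) (hδ : δ = Real.sqrt (∑ i, (pv i) ^ 2) / 2)
    (hω : ω = ((∑ i, (dx i) ^ 2) + ∑ i, (ds i) ^ 2) / 2)
    (hθ : θ ∈ Set.Ioo (0 : ℝ) 1)
    (vpsq : Fin n → ℝ)
    (hvp : ∀ i, vpsq i =
      (1 + ((9 * (v i) ^ 2 - 4) / (v i) ^ 2) * ((pv i) ^ 2 / 4) - (qv i) ^ 2 / 4) / (1 - θ)) :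
    Real.sqrt (∑ i, (1 - vpsq i) ^ 2) ≤ (θ * Real.sqrt n + 10 * δ ^ 2 + ω) / (1 - θ) := by
  obtain ⟨hθ0, hθ1⟩ := hθ
  set a : Fin n → ℝ := fun i => (9 * v i ^ 2 - 4) / v i ^ 2 * (pv i ^ 2 / 4)
  set b : Fin n → ℝ := fun i => qv i ^ 2 / 4
  have hδ_sq : δ ^ 2 = (∑ i, pv i ^ 2) / 4 := by
    rw [hδ, div_pow, Real.sq_sqrt (sum_nonneg fun i _ => sq_nonneg _)]
    norm_num
  have ha : ∀ i, 0 ≤ a i ∧ a i ≤ 9 / 4 * pv i ^ 2 := fun i => by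
    obtain ⟨hc0, hc9⟩ := nine_mul_sq_sub_four_div_sq_mem_Icc
      (by linarith [half_lt_sq_of_inv_sqrt_two_lt_s9 (hv i)] : 4 / 9 ≤ v i ^ 2)
    exact ⟨mul_nonneg hc0 (by positivity),
      (mul_le_mul_of_nonneg_right hc9 (by positivity)).trans_eq (by ring)⟩
  have hsum_a : ∑ i, a i ≤ 9 * δ ^ 2 := by
    calc ∑ i, a i ≤ ∑ i, 9 / 4 * pv i ^ 2 := sum_le_sum fun i _ => (ha i).2
      _ = 9 * δ ^ 2 := by rw [hδ_sq, ← mul_sum]; ring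
  have hsum_b : ∑ i, b i = ω - δ ^ 2 := by
    have := sum_sub_sq_add_sum_add_sq dx ds
    simp only [← Pi.sub_apply, ← Pi.add_apply, ← hqv, hds] at this
    rw [← sum_div, hω, hδ_sq]
    linarith
  have hgap : ∀ i, 1 - vpsq i = (-θ - a i + b i) / (1 - θ) := fun i => by
    rw [hvp i]
    field_simp
    ring
  calc √(∑ i, (1 - vpsq i) ^ 2) = √(∑ i, (-θ - a i + b i) ^ 2) / (1 - θ) := by
        simp_rw [hgap, sqrt_sum_sq_div, abs_of_pos (sub_pos.mpr hθ1)]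
    _ ≤ (|θ| * √(Fintype.card (Fin n)) + ∑ i, a i + ∑ i, b i) / (1 - θ) := by
        gcongr ?_ / _
        exact sqrt_sum_sq_neg_sub_add_le θ (fun i => (ha i).1) fun i => by positivity
    _ ≤ (θ * √n + 10 * δ ^ 2 + ω) / (1 - θ) := by
        rw [abs_of_pos hθ0, Fintype.card_fin]
        gcongr ?_ / _
        linarith [sq_nonneg δ]

theorem stmt9 (n : ℕ) (v dx ds : Fin n → ℝ)
    (hv : ∀ i, v i > 1 / Real.sqrt 2)
    (pv : Fin n → ℝ) (hpv : ∀ i, pv i = (v i - (v i) ^ 3) / (2 * (v i) ^ 2 - 1))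
    (hds : dx + ds = pv)
    (qv : Fin n → ℝ) (hqv : qv = dx - ds)
    (δ ω θ : ℝ) (hδ : δ = Real.sqrt (∑ i, (pv i) ^ 2) / 2)
    (hω : ω = ((∑ i, (dx i) ^ 2) + ∑ i, (ds i) ^ 2) / 2)
    (hθ : θ ∈ Set.Ioo (0 : ℝ) 1)
    (vpsq : Fin n → ℝ)
    (hvp : ∀ i, vpsq i =
      (1 + ((9 * (v i) ^ 2 - 4) / (v i) ^ 2) * ((pv i) ^ 2 / 4) - (qv i) ^ 2 / 4) / (1 - θ)) :
    Real.sqrt (∑ i, (1 - vpsq i) ^ 2) ≤ (θ * Real.sqrt n + 10 * δ ^ 2 + ω) / (1 - θ) :=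
  stmt9_general n v dx ds hv pv hds qv hqv δ ω θ hδ hω hθ vpsq hvp
end

section
/- Let v ∈ ℝⁿ with vᵢ > 1/√2 for all i and δ(v) = ½‖(v − v³)/(2v² − e)‖. Then ‖v‖ ≤ √n + 4δ(v). -/
/-!
Componentwise, `x - x³ = -(x - 1) · x(x + 1)` and `2x(x + 1) ≥ 2x² - 1 > 0`, so
`|vᵢ - 1| ≤ 2 |(vᵢ - vᵢ³)/(2vᵢ² - 1)|`, i.e. `‖v - e‖ ≤ 4δ(v)`. The triangle inequality
`‖v‖ ≤ ‖e‖ + ‖v - e‖` with `‖e‖ = √n` finishes.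
-/

open Finset

lemma abs_sub_one_le_two_mul_abs_div {x : ℝ} (hx : 0 < x) (hx2 : 1 < 2 * x ^ 2) :
    |x - 1| ≤ 2 * |(x - x ^ 3) / (2 * x ^ 2 - 1)| := by
  have hden : 0 < 2 * x ^ 2 - 1 := by linarith
  have hnum : |x - x ^ 3| = |x - 1| * (x * (x + 1)) := by
    rw [show x - x ^ 3 = -((x - 1) * (x * (x + 1))) by ring, abs_neg, abs_mul,
      abs_of_pos (by positivity : 0 < x * (x + 1))]
  rw [abs_div, abs_of_pos hden, hnum, mul_div_assoc', le_div_iff₀ hden]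
  nlinarith [abs_nonneg (x - 1)]

lemma sqrt_sum_sq_add_le {ι : Type*} [Fintype ι] (f g : ι → ℝ) :
    √(∑ i, (f i + g i) ^ 2) ≤ √(∑ i, f i ^ 2) + √(∑ i, g i ^ 2) := by
  simpa only [EuclideanSpace.norm_eq, Real.norm_eq_abs, sq_abs, WithLp.toLp_add,
    PiLp.add_apply, Pi.add_apply] using
    norm_add_le (WithLp.toLp 2 f : EuclideanSpace ℝ ι) (WithLp.toLp 2 g)

lemma sqrt_sum_sq_le_mul_of_abs_le {ι : Type*} [Fintype ι] {f g : ι → ℝ} {c : ℝ}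
    (hc : 0 ≤ c) (h : ∀ i, |f i| ≤ c * |g i|) :
    √(∑ i, f i ^ 2) ≤ c * √(∑ i, g i ^ 2) := by
  rw [← Real.sqrt_sq hc, ← Real.sqrt_mul (sq_nonneg c), mul_sum]
  gcongr with i
  rw [← mul_pow, sq_le_sq, abs_mul, abs_of_nonneg hc]
  exact h i

theorem stmt11 (n : ℕ) (v : Fin n → ℝ) (hv : ∀ i, v i > 1 / Real.sqrt 2)
    (δ : ℝ)
    (hδ : δ = Real.sqrt (∑ i, ((v i - (v i) ^ 3) / (2 * (v i) ^ 2 - 1)) ^ 2) / 2) :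
    Real.sqrt (∑ i, (v i) ^ 2) ≤ Real.sqrt n + 4 * δ := by
  have hpos : ∀ i, 0 < v i := fun i => lt_trans (by positivity) (hv i)
  have hsq : ∀ i, 1 < 2 * v i ^ 2 := fun i => by
    have := pow_lt_pow_left₀ (hv i) (by positivity) two_ne_zero
    rw [div_pow, Real.sq_sqrt zero_le_two] at this
    linarith
  have hdist : √(∑ i, (v i - 1) ^ 2) ≤ 4 * δ := by
    rw [hδ, mul_div_assoc', mul_div_right_comm, show (4 : ℝ) / 2 = 2 by norm_num]
    exact sqrt_sum_sq_le_mul_of_abs_le zero_le_two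
      fun i => abs_sub_one_le_two_mul_abs_div (hpos i) (hsq i)
  calc √(∑ i, v i ^ 2) = √(∑ i, (1 + (v i - 1)) ^ 2) := by simp only [add_sub_cancel]
    _ ≤ √(∑ _i : Fin n, (1 : ℝ) ^ 2) + √(∑ i, (v i - 1) ^ 2) := sqrt_sum_sq_add_le _ _
    _ ≤ √n + 4 * δ := by simpa using hdist
end

section
/- Let d_x lie in the affine space N + q and d_s in N^⊥ + q for a linear subspace N of ℝⁿ and q ∈ ℝⁿ, with d_x + d_s = p. Then ‖d_x‖² + ‖d_s‖² ≤ ‖q‖² + (‖q‖ + ‖p‖)². -/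
open scoped RealInnerProductSpace

section

variable {E : Type*} [NormedAddCommGroup E] [InnerProductSpace ℝ E]

theorem norm_add_sq_add_norm_add_sq_of_inner_eq_zero {u v : E} (q : E) (h : ⟪u, v⟫ = 0) :
    ‖u + q‖ ^ 2 + ‖v + q‖ ^ 2 = ‖q‖ ^ 2 + ‖u + v + q‖ ^ 2 := by
  rw [norm_add_sq_real, norm_add_sq_real, norm_add_sq_real (u + v), norm_add_sq_real u,
    inner_add_left, h]
  ring

theorem norm_sq_add_norm_sq_eq_of_sub_mem_orthogonal {K : Submodule ℝ E} {q x y : E}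
    (hx : x - q ∈ K) (hy : y - q ∈ Kᗮ) :
    ‖x‖ ^ 2 + ‖y‖ ^ 2 = ‖q‖ ^ 2 + ‖x + y - q‖ ^ 2 := by
  have horth : ⟪x - q, y - q⟫ = 0 := (Submodule.mem_orthogonal K (y - q)).mp hy (x - q) hx
  have hxy : x + y - q = x - q + (y - q) + q := by abel
  rw [hxy, ← norm_add_sq_add_norm_add_sq_of_inner_eq_zero q horth, sub_add_cancel,
    sub_add_cancel]

end

theorem stmt18 (n : ℕ) (N : Submodule ℝ (EuclideanSpace ℝ (Fin n)))
    (q p dx ds : EuclideanSpace ℝ (Fin n))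
    (hx : dx - q ∈ N) (hs : ds - q ∈ Nᗮ) (hsum : dx + ds = p) :
    ‖dx‖ ^ 2 + ‖ds‖ ^ 2 ≤ ‖q‖ ^ 2 + (‖q‖ + ‖p‖) ^ 2 := by
  rw [norm_sq_add_norm_sq_eq_of_sub_mem_orthogonal hx hs, hsum]
  gcongr
  exact (norm_sub_le p q).trans_eq (add_comm _ _)
end
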